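/- As x → 0⁺, −log F(x) = 1/(2x²) + O(log(1/x)); that is, the function x ↦ −log F(x) − 1/(2x²) is O(log(1/x)) as x → 0⁺. -/

import Mathlib

/-!
On `(0, x]` the argument `1/v + v/2` of `φ` is at least `1/x`, so `F x ≤ x φ(1/x)`. On the
subinterval `[x/(1+x²), x]`, of length at least `x³/2`, it is at most `1/x + 2x`, and
`(1/x + 2x)²/2 = 1/(2x²) + O(1)`, so `F x ≥ (x³/2) φ(1/x + 2x)`. Taking logarithms,
`-log F x - 1/(2x²)` lies between `log(1/x) + log √(2π)` and `3 log(1/x) + O(1)`.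
-/

open Real Set Filter

/-- Standard normal density. -/
noncomputable def stdNormalPDF (x : ℝ) : ℝ :=
  Real.exp (-x ^ 2 / 2) / Real.sqrt (2 * Real.pi)

/-- `F x = ∫_0^x φ(1/v + v/2) dv`. -/
noncomputable def F (x : ℝ) : ℝ :=
  ∫ v in (0 : ℝ)..x, stdNormalPDF (1 / v + v / 2)

lemma stdNormalPDF_pos (t : ℝ) : 0 < stdNormalPDF t := by
  unfold stdNormalPDF; positivity

lemma stdNormalPDF_le_stdNormalPDF {s t : ℝ} (hs : 0 ≤ s) (hst : s ≤ t) :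
    stdNormalPDF t ≤ stdNormalPDF s := by
  unfold stdNormalPDF
  gcongr

lemma stdNormalPDF_le (t : ℝ) : stdNormalPDF t ≤ stdNormalPDF 0 := by
  unfold stdNormalPDF
  gcongr exp ?_ / _
  nlinarith [sq_nonneg t]

lemma log_stdNormalPDF (t : ℝ) :
    log (stdNormalPDF t) = -t ^ 2 / 2 - log (sqrt (2 * π)) := by
  rw [stdNormalPDF, log_div (exp_ne_zero _) (by positivity), log_exp]

lemma log_sqrt_two_pi_nonneg : 0 ≤ log (sqrt (2 * π)) :=
  log_nonneg <| one_le_sqrt.2 <| by nlinarith [pi_gt_three]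

lemma intervalIntegrable_stdNormalPDF_comp {f : ℝ → ℝ} (hf : Measurable f) (a b : ℝ) :
    IntervalIntegrable (fun v => stdNormalPDF (f v)) MeasureTheory.volume a b := by
  refine ⟨?_, ?_⟩ <;>
  · refine MeasureTheory.Measure.integrableOn_of_bounded measure_Ioc_lt_top.ne
      (by unfold stdNormalPDF; fun_prop) (M := stdNormalPDF 0) (.of_forall fun v => ?_)
    rw [norm_of_nonneg (stdNormalPDF_pos _).le]
    exact stdNormalPDF_le _

lemma measurable_one_div_add_half : Measurable fun v : ℝ => 1 / v + v / 2 := by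
  fun_prop

lemma F_le_mul_stdNormalPDF {x : ℝ} (hx : 0 ≤ x) : F x ≤ x * stdNormalPDF (1 / x) := by
  calc F x ≤ ∫ _ in (0 : ℝ)..x, stdNormalPDF (1 / x) := by
        -- open interval only: at `v = 0` the integrand is `φ 0`, since `1 / 0 = 0`
        refine intervalIntegral.integral_mono_on_of_le_Ioo hx
          (intervalIntegrable_stdNormalPDF_comp measurable_one_div_add_half 0 x)
          intervalIntegrable_const fun v ⟨hv0, hvx⟩ => ?_
        refine stdNormalPDF_le_stdNormalPDF (by positivity) ?_
        have : 1 / x ≤ 1 / v := one_div_le_one_div_of_le hv0 hvx.le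
        linarith
    _ = x * stdNormalPDF (1 / x) := by simp

lemma one_div_add_half_le {x v : ℝ} (hx : 0 < x) (hv : v ∈ Icc (x / (1 + x ^ 2)) x) :
    1 / v + v / 2 ≤ 1 / x + 2 * x := by
  have hinv : 1 / v ≤ 1 / x + x := by
    calc 1 / v ≤ 1 / (x / (1 + x ^ 2)) := one_div_le_one_div_of_le (by positivity) hv.1
      _ = 1 / x + x := by field_simp
  linarith [hv.2]

lemma mul_stdNormalPDF_le_F {x : ℝ} (hx0 : 0 < x) (hx1 : x ≤ 1) :
    x ^ 3 / 2 * stdNormalPDF (1 / x + 2 * x) ≤ F x := by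
  have hlen : x ^ 3 / 2 ≤ x - x / (1 + x ^ 2) := by
    rw [show x - x / (1 + x ^ 2) = x ^ 3 / (1 + x ^ 2) by field_simp; ring]
    gcongr
    nlinarith
  have hsub : x / (1 + x ^ 2) ≤ x := div_le_self hx0.le (by nlinarith)
  calc x ^ 3 / 2 * stdNormalPDF (1 / x + 2 * x)
      ≤ (x - x / (1 + x ^ 2)) * stdNormalPDF (1 / x + 2 * x) := by
        gcongr; exact (stdNormalPDF_pos _).le
    _ = ∫ _ in x / (1 + x ^ 2)..x, stdNormalPDF (1 / x + 2 * x) := by simp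
    _ ≤ ∫ v in x / (1 + x ^ 2)..x, stdNormalPDF (1 / v + v / 2) := by
        refine intervalIntegral.integral_mono_on hsub intervalIntegrable_const
          (intervalIntegrable_stdNormalPDF_comp measurable_one_div_add_half _ _) fun v hv => ?_
        have hv0 : 0 < v := lt_of_lt_of_le (by positivity) hv.1
        exact stdNormalPDF_le_stdNormalPDF (by positivity) (one_div_add_half_le hx0 hv)
    _ ≤ F x :=
        intervalIntegral.integral_mono_interval (by positivity) hsub le_rfl
          (.of_forall fun _ => (stdNormalPDF_pos _).le)
          (intervalIntegrable_stdNormalPDF_comp measurable_one_div_add_half 0 x)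

lemma F_pos {x : ℝ} (hx0 : 0 < x) (hx1 : x ≤ 1) : 0 < F x :=
  lt_of_lt_of_le (by have := stdNormalPDF_pos (1 / x + 2 * x); positivity)
    (mul_stdNormalPDF_le_F hx0 hx1)

lemma le_neg_log_F_sub {x : ℝ} (hx0 : 0 < x) (hx1 : x ≤ 1) :
    log (1 / x) + log (sqrt (2 * π)) ≤ -log (F x) - 1 / (2 * x ^ 2) := by
  have hlog := log_le_log (F_pos hx0 hx1) (F_le_mul_stdNormalPDF hx0.le)
  rw [log_mul hx0.ne' (stdNormalPDF_pos _).ne', log_stdNormalPDF] at hlog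
  have hsq : -(1 / x) ^ 2 / 2 = -(1 / (2 * x ^ 2)) := by ring
  rw [one_div x, log_inv]
  linarith

lemma neg_log_F_sub_le {x : ℝ} (hx0 : 0 < x) (hx1 : x ≤ 1) :
    -log (F x) - 1 / (2 * x ^ 2) ≤ 3 * log (1 / x) + (log 2 + 4 + log (sqrt (2 * π))) := by
  have hlog := log_le_log (by have := stdNormalPDF_pos (1 / x + 2 * x); positivity)
    (mul_stdNormalPDF_le_F hx0 hx1)
  rw [log_mul (by positivity) (stdNormalPDF_pos _).ne', log_div (by positivity) two_ne_zero,
    log_pow, log_stdNormalPDF] at hlog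
  have hsq : -(1 / x + 2 * x) ^ 2 / 2 = -(1 / (2 * x ^ 2)) - 2 - 2 * x ^ 2 := by
    field_simp; ring
  have hx2 : x ^ 2 ≤ 1 := pow_le_one₀ hx0.le hx1
  rw [one_div x, log_inv]
  push_cast at hlog
  linarith

/-- `−log F(x) = 1/(2x²) + O(log(1/x))` as `x → 0⁺`. -/
theorem neg_log_F_asymptotics :
    (fun x : ℝ => -Real.log (F x) - 1 / (2 * x ^ 2))
      =O[nhdsWithin 0 (Set.Ioi 0)] (fun x : ℝ => Real.log (1 / x)) := by
  set K := log 2 + 4 + log (sqrt (2 * π))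
  have hK : 0 ≤ K := by linarith [log_sqrt_two_pi_nonneg, log_nonneg one_le_two]
  refine Asymptotics.IsBigO.of_bound (3 + K) ?_
  filter_upwards [Ioo_mem_nhdsGT (exp_pos (-1))] with x ⟨hx0, hxe⟩
  have hx1 : x ≤ 1 := hxe.le.trans (exp_le_one_iff.2 (by norm_num))
  have hL : 1 ≤ log (1 / x) := by
    have := log_lt_log hx0 hxe
    rw [log_exp] at this
    rw [one_div, log_inv]
    linarith
  have hlower := le_neg_log_F_sub hx0 hx1
  have hupper := neg_log_F_sub_le hx0 hx1
  rw [norm_of_nonneg (by linarith [log_sqrt_two_pi_nonneg]), norm_of_nonneg (by linarith)]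
  linarith [mul_le_mul_of_nonneg_left hL hK]
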